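/- Let u ∈ G(ℝ^d∖{0}) be homogeneous of degree α ∈ ℝ. Then there exists v ∈ G_τ(ℝ^d) such that K(v)|_{ℝ^d∖{0}} = u in G(ℝ^d∖{0}); equivalently, there is a tempered moderate net (v_ε) on ℝ^d whose restriction to ℝ^d∖{0} differs from a representative of u by a negligible net on ℝ^d∖{0}. -/

import Mathlib

open Set Filter Topology MeasureTheory

noncomputable section

variable {E F : Type*} [NormedAddCommGroup E] [NormedSpace ℝ E]
  [NormedAddCommGroup F] [NormedSpace ℝ F]

/-- A net of smooth functions, indexed by `ε ∈ (0,1]`, is *moderate* on the open set `Ω`: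
all iterated derivatives are `O(ε^{-N})` on compact subsets, for some `N`. -/
def IsModerate (Ω : Set E) (u : ℝ → E → F) : Prop :=
  (∀ ε ∈ Set.Ioc (0:ℝ) 1, ContDiffOn ℝ (⊤:ℕ∞) (u ε) Ω) ∧
  ∀ K : Set E, IsCompact K → K ⊆ Ω → ∀ n : ℕ, ∃ N : ℕ, ∃ C : ℝ, ∃ ε₀ : ℝ, 0 < ε₀ ∧
    ∀ ε : ℝ, 0 < ε → ε < ε₀ → ∀ x ∈ K,
      ‖iteratedFDerivWithin ℝ n (u ε) Ω x‖ ≤ C * ε ^ (-(N:ℤ))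

/-- A net of smooth functions is *negligible* on `Ω`: all iterated derivatives are `O(ε^m)`
on compact subsets, for every `m`. -/
def IsNegligible (Ω : Set E) (u : ℝ → E → F) : Prop :=
  (∀ ε ∈ Set.Ioc (0:ℝ) 1, ContDiffOn ℝ (⊤:ℕ∞) (u ε) Ω) ∧
  ∀ K : Set E, IsCompact K → K ⊆ Ω → ∀ n : ℕ, ∀ m : ℕ, ∃ C : ℝ, ∃ ε₀ : ℝ, 0 < ε₀ ∧
    ∀ ε : ℝ, 0 < ε → ε < ε₀ → ∀ x ∈ K,
      ‖iteratedFDerivWithin ℝ n (u ε) Ω x‖ ≤ C * ε ^ m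

/-- A net of numbers is *moderate*: `O(ε^{-N})` for some `N`. -/
def NumModerate (c : ℝ → F) : Prop :=
  ∃ N : ℕ, ∃ C : ℝ, ∃ ε₀ : ℝ, 0 < ε₀ ∧ ∀ ε : ℝ, 0 < ε → ε < ε₀ → ‖c ε‖ ≤ C * ε ^ (-(N:ℤ))

/-- A net of numbers is *negligible*: `O(ε^m)` for every `m`. -/
def NumNegligible (c : ℝ → F) : Prop :=
  ∀ m : ℕ, ∃ C : ℝ, ∃ ε₀ : ℝ, 0 < ε₀ ∧ ∀ ε : ℝ, 0 < ε → ε < ε₀ → ‖c ε‖ ≤ C * ε ^ m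

/-- A net of points is a representative of a *compactly supported generalized point* of `Ω`. -/
def CompactlySupportedPoint (Ω : Set E) (a : ℝ → E) : Prop :=
  ∃ K : Set E, IsCompact K ∧ K ⊆ Ω ∧ ∃ ε₀ : ℝ, 0 < ε₀ ∧ ∀ ε : ℝ, 0 < ε → ε < ε₀ → a ε ∈ K

/-- The partial order on generalized reals, on representatives: `a ≤ b` iff `b - a` has a
representative with all terms nonnegative, i.e. `a ε + n ε ≤ b ε` for some negligible `n`. -/
def TildeLe (a b : ℝ → ℝ) : Prop :=
  ∃ n : ℝ → ℝ, NumNegligible n ∧ ∀ ε ∈ Set.Ioc (0:ℝ) 1, a ε + n ε ≤ b ε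

/-- Strict order `a << b`: `b - a` is strictly positive, i.e. `b ε - a ε > ε^m` for some `m`
and all small `ε`. -/
def TildeLt (a b : ℝ → ℝ) : Prop :=
  ∃ m : ℕ, ∃ ε₀ : ℝ, 0 < ε₀ ∧ ∀ ε : ℝ, 0 < ε → ε < ε₀ → a ε + ε ^ m < b ε

/-- A net of smooth functions on all of ℝ^d is *tempered moderate*. -/
def TemperedModerate {E F : Type*} [NormedAddCommGroup E] [NormedSpace ℝ E]
    [NormedAddCommGroup F] [NormedSpace ℝ F] (v : ℝ → E → F) : Prop :=
  (∀ ε ∈ Set.Ioc (0:ℝ) 1, ContDiff ℝ (⊤:ℕ∞) (v ε)) ∧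
  ∀ n : ℕ, ∃ N : ℕ, ∃ C : ℝ, ∃ ε₀ : ℝ, 0 < ε₀ ∧ ∀ ε : ℝ, 0 < ε → ε < ε₀ →
    ∀ x : E, ‖iteratedFDeriv ℝ n (v ε) x‖ ≤ C * ε ^ (-(N:ℤ)) * (1 + ‖x‖) ^ N

/-!
The net `v_ε := ψ_{R(ε)} • u_ε` works, where `ψ_R` is a smooth cutoff that vanishes for
`‖x‖ < R⁻¹` and `‖x‖ > 2R` and equals `1` for `2R⁻¹ ≤ ‖x‖ ≤ R`, its `i`-th derivative being
`O(R^i)`, and where `R(ε) = 2^{m(ε)} → ∞` slowly as `ε → 0`.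

On the unit annulus `1 ≤ ‖x‖ ≤ 2` the net `u_ε` is moderate. Homogeneity for the finitely many
dilations `λ = 2^k`, `|k| ≤ M`, transports this to the shell `2^{-M} ≤ ‖x‖ ≤ 2^M`: the derivatives
of `u_ε` there are bounded by a power of `2^M` times a power of `ε⁻¹` whose exponent does not
depend on `M`. For each fixed level `m` these bounds, together with `2^{m+1} ≤ ε⁻¹`, hold for
small `ε`; a diagonal choice of `m(ε) → ∞` makes them hold at level `m(ε)` for all small `ε`.
The Leibniz rule then bounds the derivatives of `v_ε` by a fixed power of `ε⁻¹`, uniformly in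
`x`, while on each compact subset of `ℝ^d∖{0}` the cutoff is eventually identically `1`.
-/

open Metric

lemma eventually_nhdsGT_zero_iff {p : ℝ → Prop} :
    (∀ᶠ ε in 𝓝[>] (0:ℝ), p ε) ↔ ∃ ε₀, 0 < ε₀ ∧ ∀ ε, 0 < ε → ε < ε₀ → p ε := by
  simp [(nhdsGT_basis (0:ℝ)).eventually_iff, and_imp]

lemma eventually_le_inv (C : ℝ) : ∀ᶠ ε in 𝓝[>] (0:ℝ), C ≤ ε⁻¹ :=
  tendsto_inv_nhdsGT_zero.eventually_ge_atTop C

lemma exists_tendsto_atTop_and_eventually {α : Type*} {l : Filter α} {g : α → ℕ}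
    (hg : Tendsto g l atTop) {P : ℕ → α → Prop} (hP : ∀ m, ∀ᶠ a in l, P m a) :
    ∃ m : α → ℕ, Tendsto m l atTop ∧ ∀ᶠ a in l, P (m a) a := by
  classical
  have hQ : ∀ M, ∀ᶠ a in l, ∀ m ∈ Iic M, P m a := fun M =>
    (eventually_all_finite (finite_Iic M)).2 fun m _ => hP m
  refine ⟨fun a => Nat.findGreatest (fun M => ∀ m ∈ Iic M, P m a) (g a), ?_, ?_⟩
  · refine tendsto_atTop.2 fun M => ?_
    filter_upwards [hQ M, hg.eventually_ge_atTop M] with a ha hga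
    exact Nat.le_findGreatest hga ha
  · filter_upwards [hQ 0] with a ha
    exact Nat.findGreatest_spec (P := fun M => ∀ m ∈ Iic M, P m a) (Nat.zero_le _) ha _
      (mem_Iic.2 le_rfl)

lemma Real.rpow_le_pow_natCeil_abs {c R : ℝ} (hc : 0 < c) (h₁ : R⁻¹ ≤ c) (h₂ : c ≤ R)
    (α : ℝ) : c ^ α ≤ R ^ ⌈|α|⌉₊ := by
  have hR : 0 < R := hc.trans_le h₂
  have hR1 : 1 ≤ R := by
    by_contra! h
    have := (one_lt_inv₀ hR).2 h
    nlinarith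
  have hlog : |Real.log c| ≤ Real.log R := by
    refine abs_le.2 ⟨?_, Real.log_le_log hc h₂⟩
    rw [neg_le, ← Real.log_inv]
    exact Real.log_le_log (inv_pos.2 hc) ((inv_le_comm₀ hR hc).1 h₁)
  calc c ^ α = Real.exp (Real.log c * α) := Real.rpow_def_of_pos hc α
    _ ≤ Real.exp (Real.log R * |α|) := by
        refine Real.exp_le_exp.2 ((le_abs_self _).trans ?_)
        rw [abs_mul]
        exact mul_le_mul_of_nonneg_right hlog (abs_nonneg α)
    _ = R ^ |α| := (Real.rpow_def_of_pos hR _).symm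
    _ ≤ R ^ (⌈|α|⌉₊ : ℝ) := Real.rpow_le_rpow_of_exponent_le hR1 (Nat.le_ceil _)
    _ = R ^ ⌈|α|⌉₊ := Real.rpow_natCast R _

lemma exists_zpow_two_smul_eq {x : E} {M : ℕ} (h₁ : ((2:ℝ) ^ M)⁻¹ ≤ ‖x‖)
    (h₂ : ‖x‖ ≤ 2 ^ M) :
    ∃ k ∈ Finset.Icc (-(M:ℤ)) M, ∃ y ∈ closedBall (0:E) 2 \ ball 0 1, x = (2:ℝ) ^ k • y := by
  have hx : 0 < ‖x‖ := (by positivity : (0:ℝ) < ((2:ℝ) ^ M)⁻¹).trans_le h₁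
  set k := Int.log 2 ‖x‖
  have hk₁ : (2:ℝ) ^ k ≤ ‖x‖ := by exact_mod_cast Int.zpow_log_le_self one_lt_two hx
  have hk₂ : ‖x‖ < (2:ℝ) ^ (k + 1) := by exact_mod_cast Int.lt_zpow_succ_log_self one_lt_two ‖x‖
  have hc : (0:ℝ) < 2 ^ k := by positivity
  refine ⟨k, Finset.mem_Icc.2 ⟨?_, ?_⟩, ((2:ℝ) ^ k)⁻¹ • x, ?_, (smul_inv_smul₀ hc.ne' x).symm⟩
  · have h := h₁.trans_lt hk₂
    rw [← zpow_natCast, ← zpow_neg, zpow_lt_zpow_iff_right₀ one_lt_two] at h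
    omega
  · have h := hk₁.trans h₂
    rwa [← zpow_natCast, zpow_le_zpow_iff_right₀ one_lt_two] at h
  · rw [Set.mem_sdiff, mem_closedBall_zero_iff, mem_ball_zero_iff, not_lt, norm_smul,
      norm_inv, Real.norm_of_nonneg hc.le, inv_mul_le_iff₀ hc, le_inv_mul_iff₀ hc, mul_one]
    rw [zpow_add_one₀ two_ne_zero] at hk₂
    exact ⟨by linarith, hk₁⟩

lemma closedBall_sdiff_ball_subset_compl_zero {G : Type*} [NormedAddCommGroup G] {r : ℝ}
    (hr : 0 < r) (R : ℝ) : closedBall (0:G) R \ ball 0 r ⊆ {0}ᶜ := by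
  rintro x ⟨-, hx⟩ rfl
  exact hx (mem_ball_self hr)

lemma norm_iteratedFDerivWithin_comp_smul_le (f : E → F) {c : ℝ} (hc : c ≠ 0) {s : Set E}
    (hs : UniqueDiffOn ℝ s) (hsc : (c • ·) ⁻¹' s = s) {x : E} (hx : c • x ∈ s) (n : ℕ) :
    ‖iteratedFDerivWithin ℝ n (fun y => f (c • y)) s x‖ ≤
      |c| ^ n * ‖iteratedFDerivWithin ℝ n f s (c • x)‖ := by
  let g : E ≃L[ℝ] E := ContinuousLinearEquiv.smulLeft (Units.mk0 c hc)
  have hg : ‖(g : E →L[ℝ] E)‖ ≤ |c| :=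
    ContinuousLinearMap.opNorm_le_bound _ (abs_nonneg c) fun y => by simp [g, norm_smul]
  have h := g.iteratedFDerivWithin_comp_right f hs (x := x) hx n
  change iteratedFDerivWithin ℝ n (fun y => f (c • y)) ((c • ·) ⁻¹' s) x = _ at h
  rw [hsc] at h
  calc _ = ‖(iteratedFDerivWithin ℝ n f s (c • x)).compContinuousLinearMap
          fun _ => (g : E →L[ℝ] E)‖ := congrArg norm h
    _ ≤ ‖iteratedFDerivWithin ℝ n f s (c • x)‖ * ∏ _ : Fin n, ‖(g : E →L[ℝ] E)‖ :=
        ContinuousMultilinearMap.norm_compContinuousLinearMap_le _ _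
    _ ≤ _ := by
        rw [Finset.prod_const, Finset.card_univ, Fintype.card_fin, mul_comm]
        gcongr

lemma norm_iteratedFDerivWithin_at_smul_le {f : E → F} {j : ℕ}
    (hf : ContDiffOn ℝ j f {0}ᶜ) {c : ℝ} (hc : 0 < c) (a : ℝ) {y : E} (hy : y ≠ 0) :
    ‖iteratedFDerivWithin ℝ j f {0}ᶜ (c • y)‖ ≤ c⁻¹ ^ j *
      (‖iteratedFDerivWithin ℝ j (fun z => f (c • z) - a • f z) {0}ᶜ y‖ +
        |a| * ‖iteratedFDerivWithin ℝ j f {0}ᶜ y‖) := by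
  have hs : UniqueDiffOn ℝ ({0}ᶜ : Set E) := isOpen_compl_singleton.uniqueDiffOn
  have hy' : y ∈ ({0}ᶜ : Set E) := hy
  have hfc : ContDiffOn ℝ j (fun z => f (c • z)) {0}ᶜ :=
    hf.comp (contDiff_const_smul c).contDiffOn fun z hz => by simp_all [hc.ne']
  have hpre : (c⁻¹ • ·) ⁻¹' ({0}ᶜ : Set E) = {0}ᶜ := by
    ext
    simp [hc.ne']
  have hsplit : iteratedFDerivWithin ℝ j (fun z => f (c • z)) {0}ᶜ y =
      iteratedFDerivWithin ℝ j (fun z => f (c • z) - a • f z) {0}ᶜ y +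
        a • iteratedFDerivWithin ℝ j f {0}ᶜ y := by
    have hfun : (fun z => f (c • z)) = (fun z => f (c • z) - a • f z) + a • f := by
      ext z
      simp
    have haf : ContDiffOn ℝ j (a • f) {0}ᶜ := hf.const_smul a
    have hg : ContDiffOn ℝ j (fun z => f (c • z) - a • f z) {0}ᶜ := hfc.sub haf
    rw [hfun, iteratedFDerivWithin_add_apply (hg y hy') (haf y hy') hs hy',
      iteratedFDerivWithin_const_smul_apply (hf y hy') hs hy']
  calc ‖iteratedFDerivWithin ℝ j f {0}ᶜ (c • y)‖
      = ‖iteratedFDerivWithin ℝ j (fun z => (fun w => f (c • w)) (c⁻¹ • z)) {0}ᶜ (c • y)‖ := by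
        simp [smul_smul, hc.ne']
    _ ≤ |c⁻¹| ^ j * ‖iteratedFDerivWithin ℝ j (fun w => f (c • w)) {0}ᶜ (c⁻¹ • c • y)‖ :=
        norm_iteratedFDerivWithin_comp_smul_le (fun w => f (c • w)) (inv_ne_zero hc.ne') hs
          hpre (by simpa [hc.ne'] using hy) j
    _ = c⁻¹ ^ j * ‖iteratedFDerivWithin ℝ j (fun w => f (c • w)) {0}ᶜ y‖ := by
        rw [abs_of_pos (inv_pos.2 hc), inv_smul_smul₀ hc.ne']
    _ ≤ _ := by
        rw [hsplit, ← Real.norm_eq_abs, ← norm_smul]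
        gcongr
        exact norm_add_le _ _

lemma iteratedFDeriv_eq_zero_of_notMem_tsupport {f : E → F} {x : E} (hx : x ∉ tsupport f)
    (n : ℕ) : iteratedFDeriv ℝ n f x = 0 :=
  Function.notMem_support.1 fun h => hx (support_iteratedFDeriv_subset n h)

lemma ContDiffOn.contDiff_smul_of_tsupport_subset {ψ : E → ℝ} {f : E → F} {U : Set E}
    {k : WithTop ℕ∞} (hf : ContDiffOn ℝ k f U) (hU : IsOpen U) (hψ : ContDiff ℝ k ψ)
    (hsupp : tsupport ψ ⊆ U) : ContDiff ℝ k (fun x => ψ x • f x) := by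
  refine contDiff_iff_contDiffAt.2 fun x => ?_
  by_cases hx : x ∈ U
  · exact hψ.contDiffAt.smul (hf.contDiffAt (hU.mem_nhds hx))
  · have h : (fun x => ψ x • f x) =ᶠ[𝓝 x] fun _ => 0 := notMem_tsupport_iff_eventuallyEq.1
      fun h => hx (hsupp (tsupport_smul_subset_left _ _ h))
    exact contDiffAt_const.congr_of_eventuallyEq h

lemma norm_iteratedFDerivWithin_smul_le_of_forall_le {ψ : E → ℝ} {f : E → F} {s : Set E}
    {n : ℕ} (hψ : ContDiffOn ℝ n ψ s) (hf : ContDiffOn ℝ n f s) (hs : UniqueDiffOn ℝ s)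
    {x : E} (hx : x ∈ s) {A B : ℝ} (hA : ∀ i ≤ n, ‖iteratedFDerivWithin ℝ i ψ s x‖ ≤ A)
    (hB : ∀ i ≤ n, ‖iteratedFDerivWithin ℝ i f s x‖ ≤ B) :
    ‖iteratedFDerivWithin ℝ n (fun y => ψ y • f y) s x‖ ≤ 2 ^ n * (A * B) := by
  have hA0 : 0 ≤ A := (norm_nonneg _).trans (hA 0 (Nat.zero_le n))
  calc _ ≤ ∑ i ∈ Finset.range (n + 1), (n.choose i : ℝ) * ‖iteratedFDerivWithin ℝ i ψ s x‖ *
        ‖iteratedFDerivWithin ℝ (n - i) f s x‖ :=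
        norm_iteratedFDerivWithin_smul_le hψ hf hs hx le_rfl
    _ ≤ ∑ i ∈ Finset.range (n + 1), (n.choose i : ℝ) * A * B := by
        gcongr with i hi
        · exact hA i (Nat.lt_succ_iff.1 (Finset.mem_range.1 hi))
        · exact hB _ (Nat.sub_le n i)
    _ = 2 ^ n * (A * B) := by
        rw [← Finset.sum_mul, ← Finset.sum_mul, ← Nat.cast_sum, Nat.sum_range_choose]
        push_cast
        ring

lemma IsModerate.exists_eventually_norm_le {Ω : Set E} {u : ℝ → E → F} (hu : IsModerate Ω u)
    {K : Set E} (hK : IsCompact K) (hKΩ : K ⊆ Ω) (n : ℕ) :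
    ∃ N : ℕ, ∀ᶠ ε in 𝓝[>] 0, ∀ j ≤ n, ∀ x ∈ K,
      ‖iteratedFDerivWithin ℝ j (u ε) Ω x‖ ≤ ε⁻¹ ^ N := by
  have h : ∀ j, ∃ N : ℕ, ∀ᶠ ε in 𝓝[>] 0, ∀ x ∈ K,
      ‖iteratedFDerivWithin ℝ j (u ε) Ω x‖ ≤ ε⁻¹ ^ N := by
    intro j
    obtain ⟨N, C, ε₀, hε₀, hC⟩ := hu.2 K hK hKΩ j
    refine ⟨N + 1, ?_⟩
    filter_upwards [eventually_nhdsGT_zero_iff.2 ⟨ε₀, hε₀, hC⟩, eventually_le_inv C,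
      self_mem_nhdsWithin] with ε hε hCε (hε₀ : 0 < ε) x hx
    calc _ ≤ C * ε ^ (-(N:ℤ)) := hε x hx
      _ ≤ ε⁻¹ * ε⁻¹ ^ N := by
          rw [zpow_neg, zpow_natCast, ← inv_pow]
          exact mul_le_mul_of_nonneg_right hCε (by positivity)
      _ = ε⁻¹ ^ (N + 1) := (pow_succ' _ _).symm
  choose N hN using h
  refine ⟨(Finset.Iic n).sup N, ?_⟩
  filter_upwards [(eventually_all_finite (finite_Iic n)).2 fun j _ => hN j, eventually_le_inv 1]
    with ε hε h1 j hj x hx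
  exact (hε j hj x hx).trans (pow_le_pow_right₀ h1 (Finset.le_sup (Finset.mem_Iic.2 hj)))

lemma IsNegligible.eventually_norm_le {Ω : Set E} {w : ℝ → E → F} (hw : IsNegligible Ω w)
    {K : Set E} (hK : IsCompact K) (hKΩ : K ⊆ Ω) (j : ℕ) :
    ∀ᶠ ε in 𝓝[>] 0, ∀ x ∈ K, ‖iteratedFDerivWithin ℝ j (w ε) Ω x‖ ≤ ε⁻¹ := by
  obtain ⟨C, ε₀, hε₀, hC⟩ := hw.2 K hK hKΩ j 0
  filter_upwards [eventually_nhdsGT_zero_iff.2 ⟨ε₀, hε₀, hC⟩, eventually_le_inv C]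
    with ε hε hCε x hx
  simpa using (hε x hx).trans (by simpa using hCε)

def IsHomogeneous (α : ℝ) (u : ℝ → E → F) : Prop :=
  ∀ lam : ℝ, 0 < lam →
    IsNegligible ({0}ᶜ : Set E) (fun ε x => u ε (lam • x) - lam ^ α • u ε x)

lemma norm_iteratedFDerivWithin_at_smul_le_pow {f : E → F} {j n N : ℕ}
    (hf : ContDiffOn ℝ j f {0}ᶜ) (hjn : j ≤ n) {c X T : ℝ} (hc : 0 < c) (hXc : X⁻¹ ≤ c)
    (hcX : c ≤ X) (hT : 2 ≤ T) (α : ℝ) {y : E} (hy : y ≠ 0)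
    (hdefect : ‖iteratedFDerivWithin ℝ j (fun z => f (c • z) - c ^ α • f z) {0}ᶜ y‖ ≤ T)
    (hbound : ‖iteratedFDerivWithin ℝ j f {0}ᶜ y‖ ≤ T ^ N) :
    ‖iteratedFDerivWithin ℝ j f {0}ᶜ (c • y)‖ ≤ X ^ (n + ⌈|α|⌉₊) * T ^ (N + 2) := by
  set P := ⌈|α|⌉₊
  have hX : 1 ≤ X := by
    by_contra! h
    have := (one_lt_inv₀ (hc.trans_le hcX)).2 h
    linarith
  have hT1 : 1 ≤ T := one_le_two.trans hT
  have hcX' : c⁻¹ ^ j ≤ X ^ n := (pow_le_pow_left₀ (by positivity)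
    ((inv_le_comm₀ hc (by positivity)).2 hXc) j).trans (pow_le_pow_right₀ hX hjn)
  have hcα : |c ^ α| ≤ X ^ P := by
    rw [abs_of_pos (Real.rpow_pos_of_pos hc α)]
    exact Real.rpow_le_pow_natCeil_abs hc hXc hcX α
  have hT₁ : T ≤ X ^ P * T ^ (N + 1) := by
    calc T = 1 * T ^ 1 := by ring
      _ ≤ X ^ P * T ^ (N + 1) := by
          gcongr
          · exact one_le_pow₀ hX
          · omega
  have hTN : T ^ N ≤ T ^ (N + 1) := pow_le_pow_right₀ hT1 N.le_succ
  calc ‖iteratedFDerivWithin ℝ j f {0}ᶜ (c • y)‖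
      ≤ c⁻¹ ^ j * (T + |c ^ α| * T ^ N) :=
        (norm_iteratedFDerivWithin_at_smul_le hf hc _ hy).trans (by gcongr)
    _ ≤ X ^ n * (X ^ P * T ^ (N + 1) + X ^ P * T ^ (N + 1)) := by gcongr
    _ = X ^ n * X ^ P * T ^ (N + 1) * 2 := by ring
    _ ≤ X ^ n * X ^ P * T ^ (N + 1) * T := by gcongr
    _ = X ^ (n + P) * T ^ (N + 2) := by ring

lemma IsHomogeneous.exists_eventually_norm_le [ProperSpace E] {α : ℝ} {u : ℝ → E → F}
    (hhom : IsHomogeneous α u) (hu : IsModerate ({0}ᶜ : Set E) u) (n : ℕ) :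
    ∃ N : ℕ, ∀ M : ℕ, ∀ᶠ ε in 𝓝[>] 0, ∀ j ≤ n,
      ∀ x ∈ closedBall (0:E) (2 ^ M) \ ball 0 (2 ^ M)⁻¹,
        ‖iteratedFDerivWithin ℝ j (u ε) {0}ᶜ x‖ ≤ (2 ^ M) ^ (n + ⌈|α|⌉₊) * ε⁻¹ ^ N := by
  set A : Set E := closedBall 0 2 \ ball 0 1
  have hA : IsCompact A := (isCompact_closedBall 0 2).diff isOpen_ball
  have hA0 : A ⊆ {0}ᶜ := closedBall_sdiff_ball_subset_compl_zero one_pos 2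
  obtain ⟨N, hN⟩ := hu.exists_eventually_norm_le hA hA0 n
  refine ⟨N + 2, fun M => ?_⟩
  have hdefect : ∀ᶠ ε in 𝓝[>] 0, ∀ k ∈ Finset.Icc (-(M:ℤ)) M, ∀ j ∈ Iic n, ∀ y ∈ A,
      ‖iteratedFDerivWithin ℝ j
        (fun z => u ε ((2:ℝ) ^ k • z) - ((2:ℝ) ^ k) ^ α • u ε z) {0}ᶜ y‖ ≤ ε⁻¹ :=
    (Finset.eventually_all _).2 fun k _ => (eventually_all_finite (finite_Iic n)).2 fun j _ =>
      (hhom _ (zpow_pos two_pos k)).eventually_norm_le hA hA0 j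
  filter_upwards [hN, hdefect, eventually_le_inv 2, self_mem_nhdsWithin]
    with ε hNε hdε h2 (hε : 0 < ε) j hj x hx
  rw [Set.mem_sdiff, mem_closedBall_zero_iff, mem_ball_zero_iff, not_lt] at hx
  obtain ⟨k, hk, y, hy, rfl⟩ := exists_zpow_two_smul_eq hx.2 hx.1
  have hk' := Finset.mem_Icc.1 hk
  have hu1 : ContDiffOn ℝ j (u ε) {0}ᶜ :=
    (hu.1 ε ⟨hε, (one_le_inv₀ hε).1 (one_le_two.trans h2)⟩).of_le (by exact_mod_cast le_top)
  refine norm_iteratedFDerivWithin_at_smul_le_pow hu1 hj (zpow_pos two_pos k) ?_ ?_ h2 α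
    (hA0 hy) (hdε k hk j hj y hy) (hNε j hj y hy)
  · simpa only [zpow_natCast, zpow_neg] using zpow_le_zpow_right₀ (one_le_two (α := ℝ)) hk'.1
  · simpa only [zpow_natCast] using zpow_le_zpow_right₀ (one_le_two (α := ℝ)) hk'.2

variable [FiniteDimensional ℝ E]

variable (E) in
def unitBump : ContDiffBump (0 : E) := ⟨1, 2, one_pos, one_lt_two⟩

def shellCutoff (R : ℝ) (x : E) : ℝ := unitBump E (R⁻¹ • x) - unitBump E (R • x)

lemma contDiff_shellCutoff (R : ℝ) : ContDiff ℝ (⊤ : ℕ∞) (shellCutoff (E := E) R) :=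
  ((unitBump E).contDiff.comp (contDiff_const_smul _)).sub
    ((unitBump E).contDiff.comp (contDiff_const_smul _))

lemma unitBump_eq_one {x : E} (hx : ‖x‖ ≤ 1) : unitBump E x = 1 :=
  (unitBump E).one_of_mem_closedBall (mem_closedBall_zero_iff.2 hx)

lemma unitBump_eq_zero {x : E} (hx : 2 ≤ ‖x‖) : unitBump E x = 0 :=
  (unitBump E).zero_of_le_dist (x := x) (by rwa [dist_zero_right])

lemma shellCutoff_eq_one {R : ℝ} (hR : 0 < R) {x : E} (h₁ : 2 * R⁻¹ ≤ ‖x‖) (h₂ : ‖x‖ ≤ R) :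
    shellCutoff R x = 1 := by
  rw [shellCutoff, unitBump_eq_one, unitBump_eq_zero, sub_zero]
  · rw [norm_smul, Real.norm_of_nonneg hR.le]
    rwa [← div_le_iff₀' (by positivity), div_eq_mul_inv]
  · rw [norm_smul, Real.norm_of_nonneg (inv_nonneg.2 hR.le), inv_mul_le_one₀ hR]
    exact h₂

lemma tsupport_shellCutoff_subset {R : ℝ} (hR : 1 ≤ R) :
    tsupport (shellCutoff (E := E) R) ⊆ closedBall 0 (2 * R) \ ball 0 R⁻¹ := by
  have hR0 : 0 < R := one_pos.trans_le hR
  refine closure_minimal (fun x hx => ?_) (isClosed_closedBall.sdiff isOpen_ball)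
  rw [Set.mem_sdiff, mem_closedBall_zero_iff, mem_ball_zero_iff, not_lt]
  by_contra! h
  refine hx ?_
  have hRR : R * R⁻¹ = 1 := mul_inv_cancel₀ hR0.ne'
  have hRinv : R⁻¹ ≤ 1 := inv_le_one_of_one_le₀ hR
  rcases le_or_gt ‖x‖ (2 * R) with h' | h'
  · have hxR : ‖x‖ < R⁻¹ := h h'
    rw [shellCutoff, unitBump_eq_one, unitBump_eq_one, sub_self]
    · rw [norm_smul, Real.norm_of_nonneg hR0.le]
      nlinarith
    · rw [norm_smul, Real.norm_of_nonneg (inv_nonneg.2 hR0.le)]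
      nlinarith [norm_nonneg x]
  · rw [shellCutoff, unitBump_eq_zero, unitBump_eq_zero, sub_self]
    · rw [norm_smul, Real.norm_of_nonneg hR0.le]
      nlinarith
    · rw [norm_smul, Real.norm_of_nonneg (inv_nonneg.2 hR0.le), le_inv_mul_iff₀ hR0]
      linarith

lemma exists_norm_iteratedFDeriv_shellCutoff_le (n : ℕ) :
    ∃ A, 0 ≤ A ∧ ∀ R, 1 ≤ R → ∀ i ≤ n, ∀ x : E,
      ‖iteratedFDeriv ℝ i (shellCutoff R) x‖ ≤ A * R ^ n := by
  have hb : ∀ i, ∃ B, ∀ y, ‖iteratedFDeriv ℝ i (unitBump E) y‖ ≤ B := fun i =>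
    ((unitBump E).contDiff.continuous_iteratedFDeriv (by exact_mod_cast le_top))
      |>.bounded_above_of_compact_support ((unitBump E).hasCompactSupport.iteratedFDeriv i)
  choose B hB using hb
  have hB0 : ∀ i, 0 ≤ B i := fun i => (norm_nonneg _).trans (hB i 0)
  set B' := ∑ i ∈ Finset.Iic n, B i
  have hBB' : ∀ i ≤ n, ∀ y, ‖iteratedFDeriv ℝ i (unitBump E) y‖ ≤ B' := fun i hi y =>
    (hB i y).trans (Finset.single_le_sum (fun i _ => hB0 i) (Finset.mem_Iic.2 hi))
  refine ⟨2 * B', mul_nonneg zero_le_two (Finset.sum_nonneg fun i _ => hB0 i),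
    fun R hR i hi x => ?_⟩
  have hR0 : 0 < R := one_pos.trans_le hR
  have hscale : ∀ c : ℝ, c ≠ 0 → |c| ≤ R →
      ‖iteratedFDeriv ℝ i (fun y => unitBump E (c • y)) x‖ ≤ B' * R ^ n := by
    intro c hc hcR
    have h := norm_iteratedFDerivWithin_comp_smul_le (unitBump E) hc uniqueDiffOn_univ
      preimage_univ (mem_univ (c • x)) i
    simp only [iteratedFDerivWithin_univ] at h
    calc _ ≤ R ^ n * B' := h.trans <| mul_le_mul
          ((pow_le_pow_left₀ (abs_nonneg c) hcR i).trans (pow_le_pow_right₀ hR hi))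
          (hBB' i hi _) (norm_nonneg _) (by positivity)
      _ = B' * R ^ n := mul_comm _ _
  have hsmooth : ∀ c : ℝ, ContDiffAt ℝ i (fun y => unitBump E (c • y)) x := fun c =>
    ((unitBump E).contDiff.comp (contDiff_const_smul c)).contDiffAt
  calc ‖iteratedFDeriv ℝ i (shellCutoff R) x‖
      = ‖iteratedFDeriv ℝ i (fun y => unitBump E (R⁻¹ • y)) x -
          iteratedFDeriv ℝ i (fun y => unitBump E (R • y)) x‖ := by
        rw [← iteratedFDeriv_sub_apply (hsmooth _) (hsmooth _)]
        rfl
    _ ≤ B' * R ^ n + B' * R ^ n := by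
        refine (norm_sub_le _ _).trans (add_le_add (hscale _ (inv_ne_zero hR0.ne') ?_)
          (hscale _ hR0.ne' (abs_of_pos hR0).le))
        rw [abs_of_pos (inv_pos.2 hR0)]
        exact (inv_le_one_of_one_le₀ hR).trans hR
    _ = 2 * B' * R ^ n := by ring

lemma temperedModerate_shellCutoff_smul {u : ℝ → E → F} {R : ℝ → ℝ}
    (hu : ∀ ε ∈ Ioc (0:ℝ) 1, ContDiffOn ℝ (⊤ : ℕ∞) (u ε) {0}ᶜ) (hR : ∀ ε, 1 ≤ R ε)
    (hRε : ∀ᶠ ε in 𝓝[>] 0, R ε ≤ ε⁻¹)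
    (hbound : ∀ n, ∃ N : ℕ, ∀ᶠ ε in 𝓝[>] 0, ∀ j ≤ n,
      ∀ x ∈ closedBall (0:E) (2 * R ε) \ ball 0 (R ε)⁻¹,
        ‖iteratedFDerivWithin ℝ j (u ε) {0}ᶜ x‖ ≤ ε⁻¹ ^ N) :
    TemperedModerate (fun ε x => shellCutoff (R ε) x • u ε x) := by
  have hΩ : IsOpen ({0}ᶜ : Set E) := isOpen_compl_singleton
  have hsupp : ∀ ε, tsupport (shellCutoff (E := E) (R ε)) ⊆ {0}ᶜ := fun ε =>
    (tsupport_shellCutoff_subset (hR ε)).trans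
      (closedBall_sdiff_ball_subset_compl_zero (inv_pos.2 (one_pos.trans_le (hR ε))) _)
  refine ⟨fun ε hε => (hu ε hε).contDiff_smul_of_tsupport_subset hΩ (contDiff_shellCutoff _)
    (hsupp ε), fun n => ?_⟩
  obtain ⟨A, hA0, hA⟩ := exists_norm_iteratedFDeriv_shellCutoff_le (E := E) n
  obtain ⟨N, hN⟩ := hbound n
  refine ⟨n + N, 2 ^ n * A, eventually_nhdsGT_zero_iff.1 ?_⟩
  filter_upwards [hN, hRε, eventually_le_inv 1, self_mem_nhdsWithin]
    with ε hNε hRε h1 (hε : 0 < ε) x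
  have hnorm : ‖iteratedFDeriv ℝ n (fun x => shellCutoff (R ε) x • u ε x) x‖ ≤
      2 ^ n * A * ε⁻¹ ^ (n + N) := by
    by_cases hx : x ∈ tsupport (shellCutoff (R ε))
    · have hx0 : x ∈ ({0}ᶜ : Set E) := hsupp ε hx
      have hu' : ContDiffOn ℝ n (u ε) {0}ᶜ :=
        (hu ε ⟨hε, (one_le_inv₀ hε).1 h1⟩).of_le (by exact_mod_cast le_top)
      rw [← iteratedFDerivWithin_of_isOpen n hΩ hx0]
      refine (norm_iteratedFDerivWithin_smul_le_of_forall_le (A := A * ε⁻¹ ^ n)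
        ((contDiff_shellCutoff _).of_le (by exact_mod_cast le_top)).contDiffOn hu'
        hΩ.uniqueDiffOn hx0 (fun i hi => ?_)
        (fun j hj => hNε j hj x (tsupport_shellCutoff_subset (hR ε) hx))).trans_eq (by ring)
      rw [iteratedFDerivWithin_of_isOpen i hΩ hx0]
      exact (hA _ (hR ε) i hi x).trans (by gcongr; exact (zero_le_one.trans (hR ε)))
    · rw [iteratedFDeriv_eq_zero_of_notMem_tsupport
        (fun h => hx (tsupport_smul_subset_left _ _ h)), norm_zero]
      positivity
  calc _ ≤ 2 ^ n * A * ε⁻¹ ^ (n + N) * 1 := by rwa [mul_one]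
    _ ≤ 2 ^ n * A * ε ^ (-((n + N : ℕ) : ℤ)) * (1 + ‖x‖) ^ (n + N) := by
        rw [zpow_neg, zpow_natCast, inv_pow]
        gcongr
        exact one_le_pow₀ (le_add_of_nonneg_right (norm_nonneg x))

lemma isNegligible_shellCutoff_smul_sub {u : ℝ → E → F} {R : ℝ → ℝ}
    (hu : ∀ ε ∈ Ioc (0:ℝ) 1, ContDiffOn ℝ (⊤ : ℕ∞) (u ε) {0}ᶜ)
    (hR : Tendsto R (𝓝[>] 0) atTop) :
    IsNegligible ({0}ᶜ : Set E) (fun ε x => shellCutoff (R ε) x • u ε x - u ε x) := by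
  refine ⟨fun ε hε => ((contDiff_shellCutoff _).contDiffOn.smul (hu ε hε)).sub (hu ε hε),
    fun K hK hKΩ n m => ?_⟩
  obtain ⟨r, hr, hrK⟩ : ∃ r > 0, ball (0:E) r ⊆ Kᶜ :=
    Metric.isOpen_iff.1 hK.isClosed.isOpen_compl 0 fun h => hKΩ h rfl
  obtain ⟨ρ, hρ⟩ := hK.isBounded.subset_closedBall 0
  refine ⟨1, eventually_nhdsGT_zero_iff.1 ?_⟩
  filter_upwards [hR.eventually_gt_atTop (2 / r), hR.eventually_gt_atTop ρ,
    hR.eventually_gt_atTop 0, self_mem_nhdsWithin] with ε hRr hRρ hR0 (hε : 0 < ε) x hx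
  have hopen : IsOpen {y : E | 2 * (R ε)⁻¹ < ‖y‖ ∧ ‖y‖ < R ε} :=
    (isOpen_lt continuous_const continuous_norm).inter (isOpen_lt continuous_norm continuous_const)
  have hxmem : 2 * (R ε)⁻¹ < ‖x‖ ∧ ‖x‖ < R ε := by
    have h1 : r ≤ ‖x‖ := by
      by_contra! h
      exact hrK (mem_ball_zero_iff.2 h) hx
    have h2 : ‖x‖ ≤ ρ := mem_closedBall_zero_iff.1 (hρ hx)
    refine ⟨lt_of_lt_of_le ?_ h1, h2.trans_lt hRρ⟩
    rwa [← div_eq_mul_inv, div_lt_iff₀ hR0, mul_comm, ← div_lt_iff₀ hr]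
  have hzero : (fun y => shellCutoff (R ε) y • u ε y - u ε y) =ᶠ[𝓝 x] 0 := by
    filter_upwards [hopen.mem_nhds hxmem] with y hy
    rw [shellCutoff_eq_one hR0 hy.1.le hy.2.le, one_smul, sub_self, Pi.zero_apply]
  rw [iteratedFDerivWithin_of_isOpen n isOpen_compl_singleton (hKΩ hx),
    iteratedFDeriv_eq_zero_of_notMem_tsupport (notMem_tsupport_iff_eventuallyEq.2 hzero),
    norm_zero, one_mul]
  positivity

theorem IsHomogeneous.exists_temperedModerate {α : ℝ} {u : ℝ → E → F}
    (hhom : IsHomogeneous α u) (hu : IsModerate ({0}ᶜ : Set E) u) :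
    ∃ v : ℝ → E → F, TemperedModerate v ∧
      IsNegligible ({0}ᶜ : Set E) (fun ε x => v ε x - u ε x) := by
  choose N hN using hhom.exists_eventually_norm_le hu
  obtain ⟨m, hm, hmP⟩ := exists_tendsto_atTop_and_eventually
    (tendsto_nat_floor_atTop.comp tendsto_inv_nhdsGT_zero)
    (P := fun m ε => (2:ℝ) ^ (m + 1) ≤ ε⁻¹ ∧ ∀ n ≤ m, ∀ j ≤ n,
      ∀ x ∈ closedBall (0:E) (2 * 2 ^ m) \ ball 0 (2 ^ m)⁻¹,
        ‖iteratedFDerivWithin ℝ j (u ε) {0}ᶜ x‖ ≤ ε⁻¹ ^ (n + ⌈|α|⌉₊ + N n)) fun m => by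
    filter_upwards [eventually_le_inv (2 ^ (m + 1)),
      (eventually_all_finite (finite_Iic m)).2 fun n _ => hN n (m + 1), self_mem_nhdsWithin]
      with ε hε hNε (hε₀ : 0 < ε)
    refine ⟨hε, fun n hn j hj x hx => (hNε n hn j hj x ?_).trans ?_⟩
    · refine sdiff_subset_sdiff (closedBall_subset_closedBall (pow_succ' (2:ℝ) m).ge)
        (ball_subset_ball ?_) hx
      exact inv_anti₀ (by positivity) (pow_le_pow_right₀ one_le_two m.le_succ)
    · rw [pow_add ε⁻¹]
      gcongr
  have hR : ∀ ε, (1:ℝ) ≤ 2 ^ m ε := fun ε => one_le_pow₀ one_le_two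
  refine ⟨_, temperedModerate_shellCutoff_smul hu.1 hR ?_ fun n => ⟨n + ⌈|α|⌉₊ + N n, ?_⟩,
    isNegligible_shellCutoff_smul_sub hu.1 ((tendsto_pow_atTop_atTop_of_one_lt one_lt_two).comp hm)⟩
  · filter_upwards [hmP] with ε hε
    exact (pow_le_pow_right₀ one_le_two (m ε).le_succ).trans hε.1
  · filter_upwards [hmP, hm.eventually_ge_atTop n] with ε hε hn
    exact hε.2 n hn

/-- a generalized function on ℝ^d∖{0} homogeneous of degree `α` agrees on
ℝ^d∖{0} with (the class of) a tempered moderate net on ℝ^d. -/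
theorem statement_17
    (d : ℕ) (α : ℝ)
    (u : ℝ → EuclideanSpace ℝ (Fin d) → ℂ)
    (hu : IsModerate ({0}ᶜ : Set (EuclideanSpace ℝ (Fin d))) u)
    (hhom : ∀ lam : ℝ, 0 < lam →
      IsNegligible ({0}ᶜ : Set (EuclideanSpace ℝ (Fin d)))
        (fun ε x => u ε (lam • x) - ((lam ^ α : ℝ) : ℂ) * u ε x)) :
    ∃ v : ℝ → EuclideanSpace ℝ (Fin d) → ℂ, TemperedModerate v ∧
      IsNegligible ({0}ᶜ : Set (EuclideanSpace ℝ (Fin d)))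
        (fun ε x => v ε x - u ε x) := by
  refine IsHomogeneous.exists_temperedModerate (α := α) (fun lam hlam => ?_) hu
  simpa only [Complex.real_smul] using hhom lam hlam
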